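/- arXiv:2603.12995 — 2 statements merged into one kernel-verified Lean document; each statement's English description precedes it below -/
import Mathlib

section
/- For every point x of the subtour polytope S^n, every vertex of the support graph of x has degree at least 2, and if x is an extreme point that is not the incidence vector of a Hamiltonian cycle, then its support graph has at least one vertex of degree at least 3. -/
open Finset
open scoped Classical

noncomputable section

/-- Edge set of the complete graph `K_n` as non-diagonal elements of `Sym2 (Fin n)`. -/
def edgeSet (n : ℕ) : Finset (Sym2 (Fin n)) :=
  Finset.univ.filter (fun e => ¬ e.IsDiag)

/-- The cut `δ(S)`: edges with exactly one endpoint in `S`. -/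
def cut {n : ℕ} (S : Finset (Fin n)) : Finset (Sym2 (Fin n)) :=
  Finset.univ.filter (fun e => ¬ e.IsDiag ∧ ∃ u v : Fin n, e = s(u, v) ∧ u ∈ S ∧ v ∉ S)

/-- Membership in the subtour polytope `S^n`. -/
def InSubtour (n : ℕ) (x : Sym2 (Fin n) → ℝ) : Prop :=
  (∀ e ∈ edgeSet n, 0 ≤ x e ∧ x e ≤ 1) ∧
  (∀ v : Fin n, ∑ e ∈ cut ({v} : Finset (Fin n)), x e = 2) ∧
  (∀ S : Finset (Fin n), 2 ≤ S.card → S.card ≤ n - 2 → 2 ≤ ∑ e ∈ cut S, x e)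

/-- Extreme point of the subtour polytope: not a proper convex combination
(equivalently, not the midpoint of two distinct points of `S^n`). -/
def IsExtremePt (n : ℕ) (x : Sym2 (Fin n) → ℝ) : Prop :=
  InSubtour n x ∧
  ∀ y z : Sym2 (Fin n) → ℝ, InSubtour n y → InSubtour n z →
    (∀ e ∈ edgeSet n, x e = (y e + z e) / 2) → ∀ e ∈ edgeSet n, y e = z e

/-- Support edges of `x`: edges with strictly positive value. -/
def supportEdges {n : ℕ} (x : Sym2 (Fin n) → ℝ) : Finset (Sym2 (Fin n)) :=
  (edgeSet n).filter (fun e => 0 < x e)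

/-- Degree of a vertex in the support graph of `x`. -/
def supDeg {n : ℕ} (x : Sym2 (Fin n) → ℝ) (v : Fin n) : ℕ :=
  (cut ({v} : Finset (Fin n)) ∩ supportEdges x).card

/-- `x` is the incidence vector of a Hamiltonian cycle of `K_n`. -/
def IsHamCycle (n : ℕ) (x : Sym2 (Fin n) → ℝ) : Prop :=
  ∃ σ : Equiv.Perm (Fin n), σ.IsCycle ∧ σ.support = Finset.univ ∧
    ∀ e ∈ edgeSet n, x e = if (∃ v : Fin n, e = s(v, σ v)) then 1 else 0

/-- Cost `c^T x` over the edges of `K_n`. -/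
def cost {n : ℕ} (c x : Sym2 (Fin n) → ℝ) : ℝ := ∑ e ∈ edgeSet n, c e * x e

/-- `c` is a metric cost function: nonnegative (symmetry is built into `Sym2`)
and satisfying the triangle inequality. -/
def IsMetricCost (n : ℕ) (c : Sym2 (Fin n) → ℝ) : Prop :=
  (∀ e, 0 ≤ c e) ∧ ∀ i j k : Fin n, c s(i, k) ≤ c s(i, j) + c s(j, k)

/-!
At each vertex the support edges carry total weight `2` and each weighs at most `1`, so there
are at least two of them. If no vertex has three, every vertex has exactly two support edges,
both of weight `1`: `x` is the incidence vector of its 2-regular support graph. No support edge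
leaves a connected component `S` of that graph, so `x(δ(S)) = 0`; since `S` and its complement
each contain an edge, the subtour constraints leave only `S = univ`. A connected 2-regular graph
is a single cycle, and walking around it gives the cyclic permutation.
-/

namespace SimpleGraph

variable {V : Type*} {G : SimpleGraph V}

lemma IsRegularOfDegree.isCycles [Fintype V] [DecidableRel G.Adj] (h : G.IsRegularOfDegree 2) :
    G.IsCycles := fun v _ => by
  rw [Set.ncard_eq_toFinset_card']
  exact h v

lemma Walk.getElem_dropLast_support {u v : V} (p : G.Walk u v) {i : ℕ}
    (hi : i < p.support.dropLast.length) : p.support.dropLast[i] = p.getVert i := by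
  rw [List.getElem_dropLast, Walk.support_getElem_eq_getVert]

lemma Walk.IsCycle.formPerm_dropLast_getVert [DecidableEq V] {v : V} {p : G.Walk v v}
    (hp : p.IsCycle) {i : ℕ} (hi : i < p.length) :
    p.support.dropLast.formPerm (p.getVert i) = p.getVert (i + 1) := by
  have hlen : p.support.dropLast.length = p.length := by simp
  have h := List.formPerm_apply_getElem _ hp.nodup_dropLast_support i (hlen ▸ hi)
  rw [p.getElem_dropLast_support, p.getElem_dropLast_support, hlen] at h
  rw [h]
  rcases Nat.lt_or_ge (i + 1) p.length with h | h
  · rw [Nat.mod_eq_of_lt h]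
  · rw [show i + 1 = p.length by omega, Nat.mod_self, Walk.getVert_zero, Walk.getVert_length]

lemma Walk.IsCycle.exists_isCycle_perm [Fintype V] [DecidableEq V] [DecidableRel G.Adj]
    {v : V} {p : G.Walk v v} (hp : p.IsCycle) (hcyc : G.IsCycles) (hsupp : ∀ u, u ∈ p.support) :
    ∃ σ : Equiv.Perm V, σ.IsCycle ∧ σ.support = univ ∧
      ∀ e, e ∈ G.edgeSet ↔ ∃ u, e = s(u, σ u) := by
  have h3 := hp.three_le_length
  have hlen : p.support.dropLast.length = p.length := by simp
  have hvert : ∀ u, ∃ i < p.length, p.getVert i = u := by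
    intro u
    obtain ⟨i, rfl, hi⟩ := Walk.mem_support_iff_exists_getVert.mp (hsupp u)
    rcases hi.lt_or_eq with hi | rfl
    · exact ⟨i, hi, rfl⟩
    · exact ⟨0, by omega, by rw [Walk.getVert_zero, Walk.getVert_length]⟩
  refine ⟨p.support.dropLast.formPerm,
    List.isCycle_formPerm hp.nodup_dropLast_support (by omega), ?_, fun e => ?_⟩
  · have hsingle : ∀ u, p.support.dropLast ≠ [u] := fun u h => by
      have := congrArg List.length h
      rw [hlen, List.length_singleton] at this
      omega
    rw [List.support_formPerm_of_nodup _ hp.nodup_dropLast_support hsingle]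
    refine eq_univ_of_forall fun u => ?_
    obtain ⟨i, hi, rfl⟩ := hvert u
    rw [List.mem_toFinset, ← p.getElem_dropLast_support (hlen ▸ hi)]
    exact List.getElem_mem _
  · induction e using Sym2.ind with
    | _ a b =>
      rw [SimpleGraph.mem_edgeSet,
        ← hp.adj_toSubgraph_iff_of_isCycles hcyc (p.mem_verts_toSubgraph.mpr (hsupp a)),
        Walk.toSubgraph_adj_iff]
      constructor
      · rintro ⟨i, hi, hlt⟩
        exact ⟨p.getVert i, by rw [hp.formPerm_dropLast_getVert hlt, hi]⟩
      · rintro ⟨u, hu⟩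
        obtain ⟨i, hlt, rfl⟩ := hvert u
        exact ⟨i, by rw [hu, hp.formPerm_dropLast_getVert hlt], hlt⟩

lemma Preconnected.exists_isCycle_perm_of_isCycles [Fintype V] [DecidableEq V]
    [DecidableRel G.Adj] {v : V} (hG : G.Preconnected) (hcyc : G.IsCycles)
    (hv : (G.neighborSet v).Nonempty) :
    ∃ σ : Equiv.Perm V, σ.IsCycle ∧ σ.support = univ ∧
      ∀ e, e ∈ G.edgeSet ↔ ∃ u, e = s(u, σ u) := by
  obtain ⟨p, hp, hverts⟩ := hcyc.exists_cycle_toSubgraph_verts_eq_connectedComponentSupp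
    (c := G.connectedComponentMk v) rfl hv
  refine hp.exists_isCycle_perm hcyc fun u => ?_
  rw [← p.mem_verts_toSubgraph, hverts, ConnectedComponent.mem_supp_iff, ConnectedComponent.eq]
  exact hG u v

end SimpleGraph

def supportGraph {n : ℕ} (x : Sym2 (Fin n) → ℝ) : SimpleGraph (Fin n) :=
  SimpleGraph.fromEdgeSet {e | 0 < x e}

section SubtourPolytope

variable {n : ℕ} {x : Sym2 (Fin n) → ℝ}

lemma mem_edgeSet_iff {e : Sym2 (Fin n)} : e ∈ edgeSet n ↔ ¬ e.IsDiag := by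
  simp [edgeSet]

lemma mem_supportEdges {e : Sym2 (Fin n)} : e ∈ supportEdges x ↔ ¬ e.IsDiag ∧ 0 < x e := by
  rw [supportEdges, mem_filter, mem_edgeSet_iff]

lemma mem_supportGraph_edgeSet {e : Sym2 (Fin n)} :
    e ∈ (supportGraph x).edgeSet ↔ e ∈ supportEdges x := by
  simp [supportGraph, supportEdges, mem_edgeSet_iff, and_comm]

lemma mem_cut {S : Finset (Fin n)} {e : Sym2 (Fin n)} :
    e ∈ cut S ↔ ∃ u ∈ S, ∃ w ∉ S, e = s(u, w) := by
  simp only [cut, mem_filter, mem_univ, true_and]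
  constructor
  · rintro ⟨-, u, w, rfl, hu, hw⟩
    exact ⟨u, hu, w, hw, rfl⟩
  · rintro ⟨u, hu, w, hw, rfl⟩
    exact ⟨by rw [Sym2.mk_isDiag_iff]; rintro rfl; exact hw hu, u, w, rfl, hu, hw⟩

lemma mem_cut_singleton {v : Fin n} {e : Sym2 (Fin n)} :
    e ∈ cut {v} ↔ v ∈ e ∧ ¬ e.IsDiag := by
  simp only [mem_cut, mem_singleton, exists_eq_left]
  constructor
  · rintro ⟨w, hw, rfl⟩
    exact ⟨Sym2.mem_mk_left v w, by rw [Sym2.mk_isDiag_iff]; exact Ne.symm hw⟩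
  · rintro ⟨hv, hd⟩
    exact ⟨_, Sym2.other_ne hd hv, (Sym2.other_spec hv).symm⟩

lemma cut_subset_edgeSet (S : Finset (Fin n)) : cut S ⊆ edgeSet n := fun _ he =>
  mem_edgeSet_iff.mpr (mem_filter.mp he).2.1

lemma cut_singleton_inter_supportEdges (x : Sym2 (Fin n) → ℝ) (v : Fin n) :
    cut {v} ∩ supportEdges x = (supportGraph x).incidenceFinset v := by
  ext e
  simp only [mem_inter, mem_cut_singleton, SimpleGraph.mem_incidenceFinset,
    SimpleGraph.incidenceSet, Set.mem_ofPred_eq, mem_supportGraph_edgeSet, mem_supportEdges]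
  tauto

lemma supDeg_eq_degree (x : Sym2 (Fin n) → ℝ) (v : Fin n) :
    supDeg x v = (supportGraph x).degree v := by
  rw [supDeg, cut_singleton_inter_supportEdges, SimpleGraph.card_incidenceFinset_eq_degree]

namespace InSubtour

lemma sum_cut_inter_supportEdges (hx : InSubtour n x) (S : Finset (Fin n)) :
    ∑ e ∈ cut S ∩ supportEdges x, x e = ∑ e ∈ cut S, x e := by
  have hsupp : cut S ∩ supportEdges x = (cut S).filter (0 < x ·) := by
    ext e
    simp only [mem_inter, mem_supportEdges, mem_filter]
    exact ⟨fun h => ⟨h.1, h.2.2⟩,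
      fun h => ⟨h.1, mem_edgeSet_iff.mp (cut_subset_edgeSet S h.1), h.2⟩⟩
  rw [hsupp]
  exact sum_filter_of_ne fun e he hne => (hx.1 e (cut_subset_edgeSet S he)).1.lt_of_ne' hne

lemma sum_incidenceFinset (hx : InSubtour n x) (v : Fin n) :
    ∑ e ∈ (supportGraph x).incidenceFinset v, x e = 2 := by
  rw [← cut_singleton_inter_supportEdges, hx.sum_cut_inter_supportEdges, hx.2.1 v]

lemma le_one_of_mem_incidenceFinset (hx : InSubtour n x) {v : Fin n} {e : Sym2 (Fin n)}
    (he : e ∈ (supportGraph x).incidenceFinset v) : x e ≤ 1 := by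
  rw [← cut_singleton_inter_supportEdges] at he
  exact (hx.1 e (cut_subset_edgeSet _ (mem_inter.mp he).1)).2

lemma two_le_degree (hx : InSubtour n x) (v : Fin n) : 2 ≤ (supportGraph x).degree v := by
  have h := sum_le_card_nsmul _ x 1 fun _ he => hx.le_one_of_mem_incidenceFinset (v := v) he
  rw [hx.sum_incidenceFinset, SimpleGraph.card_incidenceFinset_eq_degree, nsmul_one] at h
  exact_mod_cast h

lemma exists_adj (hx : InSubtour n x) (v : Fin n) : ∃ w, (supportGraph x).Adj v w :=
  (supportGraph x).degree_pos_iff_exists_adj v |>.mp (by have := hx.two_le_degree v; omega)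

lemma eq_one_of_degree_eq_two (hx : InSubtour n x) {v : Fin n}
    (hv : (supportGraph x).degree v = 2) {e : Sym2 (Fin n)}
    (he : e ∈ (supportGraph x).incidenceFinset v) : x e = 1 := by
  refine (sum_eq_sum_iff_of_le fun _ he => hx.le_one_of_mem_incidenceFinset he).mp ?_ e he
  rw [hx.sum_incidenceFinset, sum_const, SimpleGraph.card_incidenceFinset_eq_degree, hv]
  norm_num

lemma eq_ite_of_isRegularOfDegree_two (hx : InSubtour n x)
    (hreg : (supportGraph x).IsRegularOfDegree 2) {e : Sym2 (Fin n)} (he : e ∈ edgeSet n) :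
    x e = if e ∈ (supportGraph x).edgeSet then 1 else 0 := by
  split_ifs with h
  · exact hx.eq_one_of_degree_eq_two (hreg _)
      ((supportGraph x).mem_incidenceFinset _ _ |>.mpr ⟨h, Sym2.out_fst_mem e⟩)
  · rw [mem_supportGraph_edgeSet, mem_supportEdges, not_and, not_lt] at h
    exact le_antisymm (h (mem_edgeSet_iff.mp he)) (hx.1 e he).1

lemma sum_cut_eq_zero_of_closed (hx : InSubtour n x) {S : Finset (Fin n)}
    (hS : ∀ a ∈ S, ∀ b, (supportGraph x).Adj a b → b ∈ S) : ∑ e ∈ cut S, x e = 0 := by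
  rw [← hx.sum_cut_inter_supportEdges]
  refine sum_eq_zero fun e he => ?_
  obtain ⟨hcut, hsupp⟩ := mem_inter.mp he
  obtain ⟨a, ha, b, hb, rfl⟩ := mem_cut.mp hcut
  exact absurd (hS a ha b ((SimpleGraph.mem_edgeSet _).mp (mem_supportGraph_edgeSet.mpr hsupp))) hb

lemma preconnected_supportGraph (hx : InSubtour n x) : (supportGraph x).Preconnected := by
  intro u w
  by_contra huw
  set S := univ.filter ((supportGraph x).Reachable u)
  have hclosed : ∀ a ∈ S, ∀ b, (supportGraph x).Adj a b → b ∈ S := fun a ha b hab => by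
    simp only [S, mem_filter, mem_univ, true_and] at ha ⊢
    exact ha.trans hab.reachable
  obtain ⟨u', hu'⟩ := hx.exists_adj u
  obtain ⟨w', hw'⟩ := hx.exists_adj w
  have hS : {u, u'} ⊆ S := by
    simp only [insert_subset_iff, singleton_subset_iff, S, mem_filter, mem_univ, true_and]
    exact ⟨SimpleGraph.Reachable.refl u, hu'.reachable⟩
  have hSc : {w, w'} ⊆ Sᶜ := by
    simp only [insert_subset_iff, singleton_subset_iff, S, mem_compl, mem_filter, mem_univ,
      true_and]
    exact ⟨huw, fun h => huw (h.trans hw'.symm.reachable)⟩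
  have h1 := card_le_card hS
  have h2 := card_le_card hSc
  rw [card_pair hu'.ne] at h1
  rw [card_pair hw'.ne, card_compl, Fintype.card_fin] at h2
  have := hx.2.2 S h1 (by omega)
  rw [hx.sum_cut_eq_zero_of_closed hclosed] at this
  norm_num at this

end InSubtour

end SubtourPolytope

/-- Every vertex of the support graph of a point of `S^n` has degree at least 2,
and an extreme point which is not a Hamiltonian cycle incidence vector has a
vertex of support degree at least 3. -/
theorem support_degrees (n : ℕ) (hn : 3 ≤ n) (x : Sym2 (Fin n) → ℝ)
    (hx : InSubtour n x) :
    (∀ v : Fin n, 2 ≤ supDeg x v) ∧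
    (IsExtremePt n x → ¬ IsHamCycle n x → ∃ v : Fin n, 3 ≤ supDeg x v) := by
  simp only [supDeg_eq_degree]
  refine ⟨hx.two_le_degree, fun _ hnotHam => ?_⟩
  by_contra! hdeg
  have hreg : (supportGraph x).IsRegularOfDegree 2 := fun v => by
    have := hx.two_le_degree v
    have := hdeg v
    omega
  obtain ⟨w, hw⟩ := hx.exists_adj ⟨0, by omega⟩
  obtain ⟨σ, hσ, hsupp, hedges⟩ :=
    hx.preconnected_supportGraph.exists_isCycle_perm_of_isCycles hreg.isCycles ⟨w, hw⟩
  refine hnotHam ⟨σ, hσ, hsupp, fun e he => ?_⟩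
  simp only [hx.eq_ite_of_isRegularOfDegree_two hreg he, hedges]
end
end

section
/- The point x' obtained from an extreme point x of S^n by subdividing a 1-edge is feasible for S^{n+1}: it satisfies all degree constraints, all bound constraints, and all subtour elimination constraints on n+1 vertices. -/
open Finset
open scoped Classical

noncomputable section

/-!
For `S ⊆ V(K_{n+1})` avoiding the new vertex `w`, write `T ⊆ V(K_n)` for the corresponding set.
The cut `δ(S)` consists of the edges of `δ(T)`, carrying the same values except that `uv` now
carries `0`, together with the edges from `T` to `w`, of which only `uw` and `vw` carry value `1`.
Hence `x'(δ(S)) = x(δ(T)) + 2·[u, v ∈ T]`, and every constraint of `S^{n+1}` reduces to one of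
`S^n`; sets containing `w` are handled through their complements.
-/

section Cut

variable {m : ℕ}

lemma mk_mem_cut {S : Finset (Fin m)} {a b : Fin m} :
    s(a, b) ∈ cut S ↔ (a ∈ S ∧ b ∉ S) ∨ (b ∈ S ∧ a ∉ S) := by
  simp only [cut, mem_filter, mem_univ, true_and, Sym2.mk_isDiag_iff]
  constructor
  · rintro ⟨-, p, q, h, hp, hq⟩
    rcases Sym2.eq_iff.mp h with ⟨rfl, rfl⟩ | ⟨rfl, rfl⟩
    · exact Or.inl ⟨hp, hq⟩
    · exact Or.inr ⟨hp, hq⟩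
  · rintro (⟨ha, hb⟩ | ⟨hb, ha⟩)
    · exact ⟨fun h => hb (h ▸ ha), a, b, rfl, ha, hb⟩
    · exact ⟨fun h => ha (h ▸ hb), b, a, Sym2.eq_swap, hb, ha⟩

lemma cut_compl (S : Finset (Fin m)) : cut Sᶜ = cut S := by
  ext e
  induction e using Sym2.ind with
  | _ a b => simp only [mk_mem_cut, mem_compl]; tauto

lemma cut_eq_image_product (S : Finset (Fin m)) :
    cut S = (S ×ˢ Sᶜ).image fun p => s(p.1, p.2) := by
  ext e
  induction e using Sym2.ind with
  | _ a b =>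
    simp only [mk_mem_cut, mem_image, mem_product, mem_compl, Prod.exists, Sym2.eq_iff]
    constructor
    · rintro (⟨ha, hb⟩ | ⟨hb, ha⟩)
      · exact ⟨a, b, ⟨ha, hb⟩, Or.inl ⟨rfl, rfl⟩⟩
      · exact ⟨b, a, ⟨hb, ha⟩, Or.inr ⟨rfl, rfl⟩⟩
    · rintro ⟨p, q, ⟨hp, hq⟩, ⟨rfl, rfl⟩ | ⟨rfl, rfl⟩⟩
      · exact Or.inl ⟨hp, hq⟩
      · exact Or.inr ⟨hp, hq⟩

lemma sum_cut (f : Sym2 (Fin m) → ℝ) (S : Finset (Fin m)) :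
    ∑ e ∈ cut S, f e = ∑ a ∈ S, ∑ b ∈ Sᶜ, f s(a, b) := by
  rw [cut_eq_image_product, sum_image, sum_product]
  rintro ⟨a, b⟩ hab ⟨a', b'⟩ hab' h
  simp only [coe_product, Set.mem_prod, mem_coe, mem_compl] at hab hab'
  rcases Sym2.eq_iff.mp h with ⟨rfl, rfl⟩ | ⟨rfl, rfl⟩
  · rfl
  · exact absurd hab.1 hab'.2

lemma InSubtour.two_le_sum_cut {x : Sym2 (Fin m) → ℝ} (hx : InSubtour m x)
    {S : Finset (Fin m)} (hS₂ : 2 ≤ #S) (hS : #S ≤ m - 1) : 2 ≤ ∑ e ∈ cut S, x e := by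
  rcases le_or_gt #S (m - 2) with h | h
  · exact hx.2.2 S hS₂ h
  · have hcompl : #Sᶜ = 1 := by rw [card_compl, Fintype.card_fin]; omega
    obtain ⟨z, hz⟩ := card_eq_one.mp hcompl
    rw [← cut_compl, hz]
    exact (hx.2.1 z).ge

end Cut

section CastSucc

variable {n : ℕ}

lemma exists_map_castSuccEmb_eq {S : Finset (Fin (n + 1))} (hS : Fin.last n ∉ S) :
    ∃ T : Finset (Fin n), T.map Fin.castSuccEmb = S := by
  obtain ⟨T, -, rfl⟩ := subset_map_iff.mp (show S ⊆ univ.map Fin.castSuccEmb by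
    rw [← Fin.Iio_last_eq_map]
    exact fun a ha => mem_Iio.mpr (Fin.lt_last_iff_ne_last.mpr fun h => hS (h ▸ ha)))
  exact ⟨T, rfl⟩

lemma sum_compl_map_castSuccEmb (g : Fin (n + 1) → ℝ) (T : Finset (Fin n)) :
    ∑ b ∈ (T.map Fin.castSuccEmb)ᶜ, g b = ∑ b ∈ Tᶜ, g b.castSucc + g (Fin.last n) := by
  simp only [compl_eq_univ_sdiff, sum_sdiff_eq_sub (subset_univ _), Fin.sum_univ_castSucc, sum_map,
    Fin.coe_castSuccEmb]
  ring

lemma sum_cut_map_castSuccEmb (f : Sym2 (Fin (n + 1)) → ℝ) (T : Finset (Fin n)) :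
    ∑ e ∈ cut (T.map Fin.castSuccEmb), f e =
      ∑ e ∈ cut T, f (e.map Fin.castSucc) + ∑ a ∈ T, f s(a.castSucc, Fin.last n) := by
  simp only [sum_cut, sum_map, sum_compl_map_castSuccEmb, sum_add_distrib, Sym2.map_mk]
  rfl

end CastSucc

structure IsSubdivision {n : ℕ} (u v : Fin n) (x : Sym2 (Fin n) → ℝ)
    (x' : Sym2 (Fin (n + 1)) → ℝ) : Prop where
  apply_left : x' s(u.castSucc, Fin.last n) = 1
  apply_right : x' s(Fin.last n, v.castSucc) = 1
  apply_old : x' s(u.castSucc, v.castSucc) = 0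
  apply_other : ∀ z : Fin n, z ≠ u → z ≠ v → x' s(z.castSucc, Fin.last n) = 0
  apply_map : ∀ a b : Fin n, s(a, b) ≠ s(u, v) → x' s(a.castSucc, b.castSucc) = x s(a, b)

namespace IsSubdivision

variable {n : ℕ} {u v : Fin n} {x : Sym2 (Fin n) → ℝ} {x' : Sym2 (Fin (n + 1)) → ℝ}

lemma apply_castSucc_last (hs : IsSubdivision u v x x') (huv : u ≠ v) (z : Fin n) :
    x' s(z.castSucc, Fin.last n) = (if z = u then 1 else 0) + (if z = v then 1 else 0) := by
  by_cases hzu : z = u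
  · subst hzu
    simp [hs.apply_left, huv]
  · by_cases hzv : z = v
    · subst hzv
      rw [Sym2.eq_swap, hs.apply_right]
      simp [hzu]
    · simp [hs.apply_other z hzu hzv, hzu, hzv]

lemma apply_map_castSucc (hs : IsSubdivision u v x x') (he : x s(u, v) = 1)
    (e : Sym2 (Fin n)) : x' (e.map Fin.castSucc) = x e - if e = s(u, v) then 1 else 0 := by
  induction e using Sym2.ind with
  | _ a b =>
    rw [Sym2.map_mk]
    split_ifs with hab
    · rcases Sym2.eq_iff.mp hab with ⟨rfl, rfl⟩ | ⟨rfl, rfl⟩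
      · rw [hs.apply_old, he]; norm_num
      · rw [Sym2.eq_swap, hs.apply_old, Sym2.eq_swap, he]; norm_num
    · rw [hs.apply_map a b hab, sub_zero]

lemma sum_cut_map_castSuccEmb (hs : IsSubdivision u v x x') (huv : u ≠ v) (he : x s(u, v) = 1)
    (T : Finset (Fin n)) :
    ∑ e ∈ cut (T.map Fin.castSuccEmb), x' e =
      ∑ e ∈ cut T, x e + if u ∈ T ∧ v ∈ T then 2 else 0 := by
  simp only [_root_.sum_cut_map_castSuccEmb, hs.apply_map_castSucc he, hs.apply_castSucc_last huv,
    sum_sub_distrib, sum_add_distrib, sum_ite_eq', mk_mem_cut]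
  by_cases hu : u ∈ T <;> by_cases hv : v ∈ T <;> norm_num [hu, hv]

lemma edge_bounds (hs : IsSubdivision u v x x') (huv : u ≠ v) (he : x s(u, v) = 1)
    (hx : ∀ e ∈ edgeSet n, 0 ≤ x e ∧ x e ≤ 1) :
    ∀ e ∈ edgeSet (n + 1), 0 ≤ x' e ∧ x' e ≤ 1 := by
  have castSucc_last (z : Fin n) : 0 ≤ x' s(z.castSucc, Fin.last n) ∧
      x' s(z.castSucc, Fin.last n) ≤ 1 := by
    rw [hs.apply_castSucc_last huv]
    split_ifs <;> simp_all
  intro e hedge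
  induction e using Sym2.ind with
  | _ a b =>
    have hab : a ≠ b := by simpa [edgeSet] using hedge
    rcases Fin.eq_castSucc_or_eq_last a with ⟨a, rfl⟩ | rfl <;>
      rcases Fin.eq_castSucc_or_eq_last b with ⟨b, rfl⟩ | rfl
    · rw [← Sym2.map_mk, hs.apply_map_castSucc he]
      have := hx s(a, b) (by simpa [edgeSet] using hab)
      split_ifs with h
      · rw [h, he]; norm_num
      · simpa using this
    · exact castSucc_last a
    · exact Sym2.eq_swap ▸ castSucc_last b
    · exact absurd rfl hab

lemma sum_cut_singleton (hs : IsSubdivision u v x x') (huv : u ≠ v) (he : x s(u, v) = 1)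
    (hx : ∀ z : Fin n, ∑ e ∈ cut {z}, x e = 2) (a : Fin (n + 1)) :
    ∑ e ∈ cut {a}, x' e = 2 := by
  rcases Fin.eq_castSucc_or_eq_last a with ⟨z, rfl⟩ | rfl
  · rw [← Fin.coe_castSuccEmb, ← map_singleton, hs.sum_cut_map_castSuccEmb huv he, hx z]
    simp only [mem_singleton, add_eq_left, ite_eq_right_iff]
    rintro ⟨rfl, rfl⟩
    exact absurd rfl huv
  · have hcompl : ({Fin.last n} : Finset (Fin (n + 1)))ᶜ = univ.map Fin.castSuccEmb := by
      ext a
      cases a using Fin.lastCases <;> simp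
    rw [← cut_compl, hcompl, hs.sum_cut_map_castSuccEmb huv he]
    simp [cut]

lemma two_le_sum_cut (hs : IsSubdivision u v x x') (huv : u ≠ v) (he : x s(u, v) = 1)
    (hx : InSubtour n x) (S : Finset (Fin (n + 1))) (hS₂ : 2 ≤ #S) (hS : #S ≤ n - 1) :
    2 ≤ ∑ e ∈ cut S, x' e := by
  wlog hlast : Fin.last n ∉ S generalizing S
  · have hcard : #Sᶜ = n + 1 - #S := by rw [card_compl, Fintype.card_fin]
    rw [← cut_compl]
    exact this Sᶜ (by omega) (by omega) (by simpa using hlast)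
  obtain ⟨T, rfl⟩ := exists_map_castSuccEmb_eq hlast
  rw [card_map] at hS₂ hS
  rw [hs.sum_cut_map_castSuccEmb huv he]
  have hT := hx.two_le_sum_cut hS₂ hS
  split_ifs <;> linarith

lemma inSubtour (hs : IsSubdivision u v x x') (huv : u ≠ v) (he : x s(u, v) = 1)
    (hx : InSubtour n x) : InSubtour (n + 1) x' :=
  ⟨hs.edge_bounds huv he hx.1, hs.sum_cut_singleton huv he hx.2.1,
    fun S hS₂ hS => hs.two_le_sum_cut huv he hx S hS₂ (by omega)⟩

end IsSubdivision

theorem subdivide_one_edge_feasible_general (n : ℕ) (u v : Fin n) (huv : u ≠ v)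
    (x : Sym2 (Fin n) → ℝ) (hx : IsExtremePt n x) (he : x s(u, v) = 1)
    (x' : Sym2 (Fin (n + 1)) → ℝ)
    (h1 : x' s(u.castSucc, Fin.last n) = 1)
    (h2 : x' s(Fin.last n, v.castSucc) = 1)
    (h3 : x' s(u.castSucc, v.castSucc) = 0)
    (h4 : ∀ z : Fin n, z ≠ u → z ≠ v → x' s(z.castSucc, Fin.last n) = 0)
    (h5 : ∀ a b : Fin n, s(a, b) ≠ s(u, v) → x' s(a.castSucc, b.castSucc) = x s(a, b)) :
    InSubtour (n + 1) x' :=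
  IsSubdivision.inSubtour ⟨h1, h2, h3, h4, h5⟩ huv he hx.1

/-- Subdividing a 1-edge of an extreme point of `S^n` yields a feasible point
of `S^{n+1}`: all bound, degree, and subtour constraints hold. -/
theorem subdivide_one_edge_feasible (n : ℕ) (hn : 3 ≤ n) (u v : Fin n) (huv : u ≠ v)
    (x : Sym2 (Fin n) → ℝ) (hx : IsExtremePt n x) (he : x s(u, v) = 1)
    (x' : Sym2 (Fin (n + 1)) → ℝ)
    (h1 : x' s(u.castSucc, Fin.last n) = 1)
    (h2 : x' s(Fin.last n, v.castSucc) = 1)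
    (h3 : x' s(u.castSucc, v.castSucc) = 0)
    (h4 : ∀ z : Fin n, z ≠ u → z ≠ v → x' s(z.castSucc, Fin.last n) = 0)
    (h5 : ∀ a b : Fin n, s(a, b) ≠ s(u, v) → x' s(a.castSucc, b.castSucc) = x s(a, b)) :
    InSubtour (n + 1) x' :=
  subdivide_one_edge_feasible_general n u v huv x hx he x' h1 h2 h3 h4 h5
end
end
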